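/- (Control, value iteration error recursion) Suppose V_i = S* V_{i-1} + ε_i, and let π'_i = argmax_π S^π V_{i-1}. If γ' ≥ max(‖G^{π'_i}‖_∞, ‖G^{π*}‖_∞), then ‖V_i - V*‖_∞ ≤ γ' ‖V_{i-1} - V*‖_∞ + ‖ε_i‖_∞. -/

import Mathlib

/-!
With `G^π = (I - γ P̂^π)⁻¹ γ (P^π - P̂^π)` (`vargaGain`) we have
`S^π U - S^π V = G^π (U - V)`. Since `(I - γ P̂^π)⁻¹ = ∑ₙ (γ P̂^π)ⁿ` is entrywise nonnegative,
`S^π V* - V* = (I - γ P̂^π)⁻¹ (r^π + γ P^π V* - V*)` is `≤ 0` for every policy (Bellman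
optimality of `V*`) and `= 0` for `π*`. Hence
`G^{π*} (W - V*) = S^{π*} W - V* ≤ S* W - V*` and
`S* W - V* = S^{π'} W - V* ≤ S^{π'} W - S^{π'} V* = G^{π'} (W - V*)`;
both ends are bounded in sup norm by `γ' ‖W - V*‖_∞`.
-/

open Matrix

/-- Supremum norm on vectors. -/
noncomputable def vnorm {d : ℕ} (v : Fin d → ℝ) : ℝ := ⨆ i, |v i|

/-- Maximum absolute row sum: the operator norm induced by the supremum norm. -/
noncomputable def mnorm {d : ℕ} (M : Matrix (Fin d) (Fin d) ℝ) : ℝ :=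
  ⨆ i, ∑ j, |M i j|

/-- Transition matrix of a deterministic policy. -/
def Pmat {d m : ℕ} (P : Fin d → Fin m → Fin d → ℝ) (pol : Fin d → Fin m) :
    Matrix (Fin d) (Fin d) ℝ :=
  fun x y => P x (pol x) y

/-- Reward vector of a deterministic policy. -/
def rvec {d m : ℕ} (r : Fin d → Fin m → ℝ) (pol : Fin d → Fin m) : Fin d → ℝ :=
  fun x => r x (pol x)

/-- The Varga operator `S^π V = (I - γ P̂^π)⁻¹ (r^π + γ (P^π - P̂^π) V)`. -/
noncomputable def varga {d : ℕ} (γ : ℝ) (Ppol Phatpol : Matrix (Fin d) (Fin d) ℝ)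
    (rpol V : Fin d → ℝ) : Fin d → ℝ :=
  ((1 - γ • Phatpol)⁻¹).mulVec (rpol + γ • ((Ppol - Phatpol).mulVec V))

/-- The Varga optimality operator `S* V = max_π S^π V` (componentwise over policies). -/
noncomputable def Sstar {d m : ℕ} (γ : ℝ) (P Phat : Fin d → Fin m → Fin d → ℝ)
    (r : Fin d → Fin m → ℝ) (V : Fin d → ℝ) : Fin d → ℝ :=
  fun x => ⨆ pol : Fin d → Fin m, varga γ (Pmat P pol) (Pmat Phat pol) (rvec r pol) V x

lemma abs_le_vnorm {d : ℕ} (v : Fin d → ℝ) (i : Fin d) : |v i| ≤ vnorm v :=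
  le_ciSup (f := fun i => |v i|) (Set.finite_range _).bddAbove i

lemma vnorm_le {d : ℕ} {v : Fin d → ℝ} {c : ℝ} (hc : 0 ≤ c) (h : ∀ i, |v i| ≤ c) :
    vnorm v ≤ c :=
  Real.iSup_le h hc

lemma vnorm_nonneg {d : ℕ} (v : Fin d → ℝ) : 0 ≤ vnorm v :=
  Real.iSup_nonneg fun i => abs_nonneg (v i)

lemma sum_abs_le_mnorm {d : ℕ} (M : Matrix (Fin d) (Fin d) ℝ) (i : Fin d) :
    ∑ j, |M i j| ≤ mnorm M :=
  le_ciSup (f := fun i => ∑ j, |M i j|) (Set.finite_range _).bddAbove i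

lemma mnorm_nonneg {d : ℕ} (M : Matrix (Fin d) (Fin d) ℝ) : 0 ≤ mnorm M :=
  Real.iSup_nonneg fun _ => Finset.sum_nonneg fun _ _ => abs_nonneg _

lemma abs_mulVec_le_of_mnorm_le {d : ℕ} {M : Matrix (Fin d) (Fin d) ℝ} {c : ℝ}
    (hM : mnorm M ≤ c) (v : Fin d → ℝ) (i : Fin d) : |(M *ᵥ v) i| ≤ c * vnorm v :=
  calc |(M *ᵥ v) i| = |∑ j, M i j * v j| := rfl
    _ ≤ ∑ j, |M i j| * |v j| := by
      simpa only [abs_mul] using Finset.abs_sum_le_sum_abs (fun j => M i j * v j) Finset.univ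
    _ ≤ ∑ j, |M i j| * vnorm v := by gcongr with j; exact abs_le_vnorm v j
    _ = (∑ j, |M i j|) * vnorm v := (Finset.sum_mul ..).symm
    _ ≤ c * vnorm v :=
      mul_le_mul_of_nonneg_right ((sum_abs_le_mnorm M i).trans hM) (vnorm_nonneg v)

section NeumannSeries

attribute [local instance] Matrix.linftyOpNormedRing Matrix.linftyOpNormedAlgebra

variable {n : Type*} [Fintype n] [DecidableEq n]

lemma linfty_opNorm_le_one_of_mem_rowStochastic {Q : Matrix n n ℝ}
    (hQ : Q ∈ rowStochastic ℝ n) : ‖Q‖ ≤ 1 := by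
  rw [linfty_opNorm_def, NNReal.coe_le_one]
  refine Finset.sup_le fun i _ => ?_
  rw [← NNReal.coe_le_coe, NNReal.coe_sum, NNReal.coe_one, ← sum_row_of_mem_rowStochastic hQ i]
  refine (Finset.sum_congr rfl fun j _ => ?_).le
  rw [coe_nnnorm, Real.norm_of_nonneg (nonneg_of_mem_rowStochastic hQ)]

lemma norm_smul_lt_one_of_mem_rowStochastic {γ : ℝ} (hγ0 : 0 ≤ γ) (hγ1 : γ < 1)
    {Q : Matrix n n ℝ} (hQ : Q ∈ rowStochastic ℝ n) : ‖γ • Q‖ < 1 :=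
  calc ‖γ • Q‖ ≤ γ * 1 := by
        rw [norm_smul, Real.norm_of_nonneg hγ0]
        gcongr
        exact linfty_opNorm_le_one_of_mem_rowStochastic hQ
    _ < 1 := by linarith

lemma isUnit_det_one_sub_of_norm_lt_one {t : Matrix n n ℝ} (ht : ‖t‖ < 1) :
    IsUnit (1 - t).det :=
  have : CompleteSpace (Matrix n n ℝ) := FiniteDimensional.complete ℝ _
  (isUnit_iff_isUnit_det _).mp (isUnit_one_sub_of_norm_lt_one ht)

lemma inv_one_sub_nonneg_of_norm_lt_one {t : Matrix n n ℝ} (ht : ‖t‖ < 1)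
    (ht0 : ∀ i j, 0 ≤ t i j) (i j : n) : 0 ≤ (1 - t)⁻¹ i j := by
  have : CompleteSpace (Matrix n n ℝ) := FiniteDimensional.complete ℝ _
  have hpow : ∀ k : ℕ, ∀ i j, 0 ≤ (t ^ k) i j := by
    intro k
    induction k with
    | zero => intro i j; rw [pow_zero, one_apply]; split_ifs <;> norm_num
    | succ k ih =>
      intro i j
      rw [pow_succ, mul_apply]
      exact Finset.sum_nonneg fun l _ => mul_nonneg (ih i l) (ht0 l j)
  have hsum := Pi.hasSum.mp (Pi.hasSum.mp (hasSum_geom_series_inverse t ht) i) j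
  rw [nonsing_inv_eq_ringInverse]
  exact hasSum_le (fun k => hpow k i j) hasSum_zero hsum

lemma isUnit_det_one_sub_smul_of_mem_rowStochastic {γ : ℝ} (hγ0 : 0 ≤ γ) (hγ1 : γ < 1)
    {Q : Matrix n n ℝ} (hQ : Q ∈ rowStochastic ℝ n) : IsUnit (1 - γ • Q).det :=
  isUnit_det_one_sub_of_norm_lt_one (norm_smul_lt_one_of_mem_rowStochastic hγ0 hγ1 hQ)

lemma inv_one_sub_smul_nonneg_of_mem_rowStochastic {γ : ℝ} (hγ0 : 0 ≤ γ) (hγ1 : γ < 1)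
    {Q : Matrix n n ℝ} (hQ : Q ∈ rowStochastic ℝ n) (i j : n) : 0 ≤ (1 - γ • Q)⁻¹ i j :=
  inv_one_sub_nonneg_of_norm_lt_one (norm_smul_lt_one_of_mem_rowStochastic hγ0 hγ1 hQ)
    (fun _ _ => smul_nonneg hγ0 (nonneg_of_mem_rowStochastic hQ)) i j

end NeumannSeries

section Varga

variable {d : ℕ} (γ : ℝ) (Pp Php : Matrix (Fin d) (Fin d) ℝ) (rp : Fin d → ℝ)

noncomputable def vargaGain : Matrix (Fin d) (Fin d) ℝ :=
  (1 - γ • Php)⁻¹ * (γ • (Pp - Php))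

lemma varga_sub_varga (U V : Fin d → ℝ) :
    varga γ Pp Php rp U - varga γ Pp Php rp V = vargaGain γ Pp Php *ᵥ (U - V) := by
  rw [varga, varga, ← mulVec_sub, vargaGain, ← mulVec_mulVec, add_sub_add_left_eq_sub,
    ← smul_sub, ← mulVec_sub, smul_mulVec]

lemma varga_sub_self (V : Fin d → ℝ) (hdet : IsUnit (1 - γ • Php).det) :
    varga γ Pp Php rp V - V = (1 - γ • Php)⁻¹ *ᵥ (rp + γ • Pp *ᵥ V - V) := by
  have hV : (1 - γ • Php)⁻¹ *ᵥ ((1 - γ • Php) *ᵥ V) = V := by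
    rw [mulVec_mulVec, nonsing_inv_mul _ hdet, one_mulVec]
  calc varga γ Pp Php rp V - V
      = (1 - γ • Php)⁻¹ *ᵥ (rp + γ • (Pp - Php) *ᵥ V)
        - (1 - γ • Php)⁻¹ *ᵥ ((1 - γ • Php) *ᵥ V) := by rw [hV]; rfl
    _ = (1 - γ • Php)⁻¹ *ᵥ (rp + γ • Pp *ᵥ V - V) := by
      rw [← mulVec_sub]
      congr 1
      simp only [sub_mulVec, one_mulVec, smul_mulVec, smul_sub]
      abel

lemma varga_eq_self {V : Fin d → ℝ} (hdet : IsUnit (1 - γ • Php).det)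
    (hV : rp + γ • Pp *ᵥ V = V) : varga γ Pp Php rp V = V := by
  rw [← sub_eq_zero, varga_sub_self γ Pp Php rp V hdet, hV, sub_self, mulVec_zero]

lemma varga_le_self {V : Fin d → ℝ} (hdet : IsUnit (1 - γ • Php).det)
    (hinv : ∀ i j, 0 ≤ (1 - γ • Php)⁻¹ i j) (hV : ∀ i, rp i + γ * (Pp *ᵥ V) i ≤ V i)
    (i : Fin d) : varga γ Pp Php rp V i ≤ V i := by
  have hdiff := congrFun (varga_sub_self γ Pp Php rp V hdet) i
  have hres : ((1 - γ • Php)⁻¹ *ᵥ (rp + γ • Pp *ᵥ V - V)) i ≤ 0 :=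
    Finset.sum_nonpos (s := Finset.univ) fun j _ =>
      mul_nonpos_of_nonneg_of_nonpos (hinv i j) (sub_nonpos.mpr (hV j))
  rw [Pi.sub_apply] at hdiff
  linarith

end Varga

section MDP

variable {d m : ℕ} {γ : ℝ} {P Phat : Fin d → Fin m → Fin d → ℝ} {r : Fin d → Fin m → ℝ}

lemma Pmat_mem_rowStochastic (hP : ∀ x a, (∀ y, 0 ≤ P x a y) ∧ ∑ y, P x a y = 1)
    (pol : Fin d → Fin m) : Pmat P pol ∈ rowStochastic ℝ (Fin d) :=
  mem_rowStochastic_iff_sum.mpr ⟨fun x => (hP x (pol x)).1, fun x => (hP x (pol x)).2⟩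

lemma varga_le_Sstar (pol : Fin d → Fin m) (W : Fin d → ℝ) (x : Fin d) :
    varga γ (Pmat P pol) (Pmat Phat pol) (rvec r pol) W x ≤ Sstar γ P Phat r W x :=
  le_ciSup (f := fun pol => varga γ (Pmat P pol) (Pmat Phat pol) (rvec r pol) W x)
    (Set.finite_range _).bddAbove pol

lemma varga_le_of_bellman (hγ0 : 0 ≤ γ) (hγ1 : γ < 1)
    (hPhat : ∀ x a, (∀ y, 0 ≤ Phat x a y) ∧ ∑ y, Phat x a y = 1) {Vstar : Fin d → ℝ}
    (hbell : ∀ x, Vstar x = ⨆ a, (r x a + γ * ∑ y, P x a y * Vstar y))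
    (pol : Fin d → Fin m) (x : Fin d) :
    varga γ (Pmat P pol) (Pmat Phat pol) (rvec r pol) Vstar x ≤ Vstar x := by
  have hQ := Pmat_mem_rowStochastic hPhat pol
  refine varga_le_self γ _ _ _ (isUnit_det_one_sub_smul_of_mem_rowStochastic hγ0 hγ1 hQ)
    (inv_one_sub_smul_nonneg_of_mem_rowStochastic hγ0 hγ1 hQ) (fun y => ?_) x
  rw [hbell y]
  exact le_ciSup (f := fun a => r y a + γ * ∑ z, P y a z * Vstar z)
    (Set.finite_range _).bddAbove (pol y)

lemma varga_eq_of_optimal (hγ0 : 0 ≤ γ) (hγ1 : γ < 1)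
    (hPhat : ∀ x a, (∀ y, 0 ≤ Phat x a y) ∧ ∑ y, Phat x a y = 1) {Vstar : Fin d → ℝ}
    {πstar : Fin d → Fin m}
    (hopt : ∀ x, Vstar x = r x (πstar x) + γ * ∑ y, P x (πstar x) y * Vstar y) :
    varga γ (Pmat P πstar) (Pmat Phat πstar) (rvec r πstar) Vstar = Vstar :=
  varga_eq_self γ _ _ _ (isUnit_det_one_sub_smul_of_mem_rowStochastic hγ0 hγ1
    (Pmat_mem_rowStochastic hPhat πstar)) (funext fun x => (hopt x).symm)

end MDP

theorem osvi_control_recursion_general {d m : ℕ}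
    (γ : ℝ) (hγ0 : 0 ≤ γ) (hγ1 : γ < 1)
    (P Phat : Fin d → Fin m → Fin d → ℝ) (r : Fin d → Fin m → ℝ)
    (hPhat : ∀ x a, (∀ y, 0 ≤ Phat x a y) ∧ ∑ y, Phat x a y = 1)
    (Vstar : Fin d → ℝ) (πstar : Fin d → Fin m)
    (hbell : ∀ x, Vstar x = ⨆ a, (r x a + γ * ∑ y, P x a y * Vstar y))
    (hopt : ∀ x, Vstar x = r x (πstar x) + γ * ∑ y, P x (πstar x) y * Vstar y)
    (W Vi ε : Fin d → ℝ) (π' : Fin d → Fin m)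
    (hargmax : varga γ (Pmat P π') (Pmat Phat π') (rvec r π') W = Sstar γ P Phat r W)
    (hVi : Vi = Sstar γ P Phat r W + ε)
    (γ' : ℝ)
    (hγ'1 : mnorm ((1 - γ • Pmat Phat π')⁻¹ *
      (γ • (Pmat P π' - Pmat Phat π'))) ≤ γ')
    (hγ'2 : mnorm ((1 - γ • Pmat Phat πstar)⁻¹ *
      (γ • (Pmat P πstar - Pmat Phat πstar))) ≤ γ') :
    vnorm (Vi - Vstar) ≤ γ' * vnorm (W - Vstar) + vnorm ε := by
  have hlow : ∀ x, (vargaGain γ (Pmat P πstar) (Pmat Phat πstar) *ᵥ (W - Vstar)) x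
      ≤ Sstar γ P Phat r W x - Vstar x := fun x => by
    rw [← varga_sub_varga γ _ _ (rvec r πstar), Pi.sub_apply,
      varga_eq_of_optimal hγ0 hγ1 hPhat hopt]
    exact sub_le_sub_right (varga_le_Sstar πstar W x) _
  have hup : ∀ x, Sstar γ P Phat r W x - Vstar x
      ≤ (vargaGain γ (Pmat P π') (Pmat Phat π') *ᵥ (W - Vstar)) x := fun x => by
    rw [← varga_sub_varga γ _ _ (rvec r π'), Pi.sub_apply, hargmax]
    exact sub_le_sub_left (varga_le_of_bellman hγ0 hγ1 hPhat hbell π' x) _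
  have hγ'0 : 0 ≤ γ' := (mnorm_nonneg _).trans hγ'1
  refine vnorm_le (add_nonneg (mul_nonneg hγ'0 (vnorm_nonneg _)) (vnorm_nonneg ε)) fun x => ?_
  calc |(Vi - Vstar) x| = |(Sstar γ P Phat r W x - Vstar x) + ε x| := by
        rw [hVi, Pi.sub_apply, Pi.add_apply, add_sub_right_comm]
    _ ≤ max |(vargaGain γ (Pmat P πstar) (Pmat Phat πstar) *ᵥ (W - Vstar)) x|
          |(vargaGain γ (Pmat P π') (Pmat Phat π') *ᵥ (W - Vstar)) x| + vnorm ε :=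
        (abs_add_le _ _).trans (add_le_add (abs_le_max_abs_abs (hlow x) (hup x)) (abs_le_vnorm ε x))
    _ ≤ γ' * vnorm (W - Vstar) + vnorm ε :=
        add_le_add_left (max_le (abs_mulVec_le_of_mnorm_le hγ'2 _ x)
          (abs_mulVec_le_of_mnorm_le hγ'1 _ x)) _

/-- Control, value iteration error recursion (Lemma 6):
if `V_i = S* V_{i-1} + ε_i` and `π'_i` attains the maximum in `S* V_{i-1}`, then
`‖V_i - V*‖_∞ ≤ γ' ‖V_{i-1} - V*‖_∞ + ‖ε_i‖_∞`. -/
theorem osvi_control_recursion {d m : ℕ} (hm : 0 < m)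
    (γ : ℝ) (hγ0 : 0 ≤ γ) (hγ1 : γ < 1)
    (P Phat : Fin d → Fin m → Fin d → ℝ) (r : Fin d → Fin m → ℝ)
    (hP : ∀ x a, (∀ y, 0 ≤ P x a y) ∧ ∑ y, P x a y = 1)
    (hPhat : ∀ x a, (∀ y, 0 ≤ Phat x a y) ∧ ∑ y, Phat x a y = 1)
    (Vstar : Fin d → ℝ) (πstar : Fin d → Fin m)
    (hbell : ∀ x, Vstar x = ⨆ a, (r x a + γ * ∑ y, P x a y * Vstar y))
    (hopt : ∀ x, Vstar x = r x (πstar x) + γ * ∑ y, P x (πstar x) y * Vstar y)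
    (W Vi ε : Fin d → ℝ) (π' : Fin d → Fin m)
    (hargmax : varga γ (Pmat P π') (Pmat Phat π') (rvec r π') W = Sstar γ P Phat r W)
    (hVi : Vi = Sstar γ P Phat r W + ε)
    (γ' : ℝ)
    (hγ'1 : mnorm ((1 - γ • Pmat Phat π')⁻¹ *
      (γ • (Pmat P π' - Pmat Phat π'))) ≤ γ')
    (hγ'2 : mnorm ((1 - γ • Pmat Phat πstar)⁻¹ *
      (γ • (Pmat P πstar - Pmat Phat πstar))) ≤ γ') :
    vnorm (Vi - Vstar) ≤ γ' * vnorm (W - Vstar) + vnorm ε :=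
  osvi_control_recursion_general γ hγ0 hγ1 P Phat r hPhat Vstar πstar hbell hopt W Vi ε π' hargmax
    hVi γ' hγ'1 hγ'2
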